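/- There are no integers a, c with a + c = 1 such that the two rational numbers (1/91)(144c + 52) and (1/91)(−12c + 26) are both non-negative integers. -/

import Mathlib

theorem Int.eq_mul_of_cast_div_eq_natCast {k d : ℤ} {n : ℕ} (hd : d ≠ 0)
    (h : (k : ℚ) / d = n) : k = d * n := by
  rw [div_eq_iff (by exact_mod_cast hd), mul_comm] at h
  exact_mod_cast h

/-- Luthar–Passi constraints excluding units of order 91 in `V(ℤRu)`: there are no
integers `a, c` with `a + c = 1` such that `(1/91)(144c + 52)` and
`(1/91)(−12c + 26)` are both non-negative integers. -/
theorem no_order91_unit_Ru :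
    ¬ ∃ a c : ℤ, a + c = 1 ∧
      (∃ n : ℕ, ((144 * c + 52 : ℤ) : ℚ) / 91 = n) ∧
      (∃ n : ℕ, ((-12 * c + 26 : ℤ) : ℚ) / 91 = n) := by
  rintro ⟨-, c, -, ⟨m, hm⟩, ⟨n, hn⟩⟩
  have hm : 144 * c + 52 = 91 * m :=
    Int.eq_mul_of_cast_div_eq_natCast (d := 91) (by norm_num) (by exact_mod_cast hm)
  have hn : -12 * c + 26 = 91 * n :=
    Int.eq_mul_of_cast_div_eq_natCast (d := 91) (by norm_num) (by exact_mod_cast hn)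
  have hc : 0 ≤ c := by omega
  -- `0 ≤ 26 - 12c ≤ 26 < 91` leaves only `26 - 12c = 0`, which has no integer solution.
  have hn0 : n = 0 := by omega
  omega
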